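/- arXiv:0905.1055 — 2 statements merged into one kernel-verified Lean document; each statement's English description precedes it below -/
import Mathlib

section
/- There exists a function g : ℝ → ℂ such that ∫_ℝ |s|^m |g(s)| ds < ∞ for every natural number m, and for all 0 < λ < μ one has λ/μ = ∫_ℝ g(s) λ^{is} μ^{-is} ds. -/
/-!
Take a Schwartz function `f` on `ℝ` with `f t = exp t` for `t ≤ 0` (exp times a smooth cutoff).
By Fourier inversion `f t = ∫ g s * exp (I * s * t) ds`, where `g` is the Fourier transform of `f`
rescaled to the angular-frequency convention; `g` is Schwartz, so all its moments are finite.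
For `0 < λ < μ` put `t = log λ - log μ < 0`: then `λ / μ = exp t = f t`.
-/

open MeasureTheory Complex
open scoped Real ContDiff FourierTransform SchwartzMap

noncomputable def expCutoff (t : ℝ) : ℝ := Real.exp t * Real.smoothTransition (1 - t)

lemma contDiff_expCutoff : ContDiff ℝ ∞ expCutoff :=
  Real.contDiff_exp.mul (Real.smoothTransition.contDiff.comp (contDiff_const.sub contDiff_id))

lemma expCutoff_of_nonpos {t : ℝ} (ht : t ≤ 0) : expCutoff t = Real.exp t := by
  rw [expCutoff, Real.smoothTransition.one_of_one_le (by linarith), mul_one]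

lemma expCutoff_of_one_le {t : ℝ} (ht : 1 ≤ t) : expCutoff t = 0 := by
  rw [expCutoff, Real.smoothTransition.zero_of_nonpos (by linarith), mul_zero]

lemma iteratedDeriv_expCutoff_of_neg (n : ℕ) {x : ℝ} (hx : x < 0) :
    iteratedDeriv n expCutoff x = Real.exp x := by
  have hEq : expCutoff =ᶠ[nhds x] Real.exp :=
    Filter.eventually_of_mem (Iio_mem_nhds hx) fun t ht => expCutoff_of_nonpos (le_of_lt ht)
  rw [hEq.iteratedDeriv_eq, iteratedDeriv_eq_iterate, Real.iter_deriv_exp]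

lemma iteratedDeriv_expCutoff_of_one_lt (n : ℕ) {x : ℝ} (hx : 1 < x) :
    iteratedDeriv n expCutoff x = 0 := by
  have hEq : expCutoff =ᶠ[nhds x] fun _ => 0 :=
    Filter.eventually_of_mem (Ioi_mem_nhds hx) fun t ht => expCutoff_of_one_le (le_of_lt ht)
  rw [hEq.iteratedDeriv_eq, iteratedDeriv_const]
  exact ite_self 0

lemma abs_pow_mul_exp_le_factorial (k : ℕ) {x : ℝ} (hx : x ≤ 0) :
    |x| ^ k * Real.exp x ≤ k.factorial := by
  have h := Real.pow_div_factorial_le_exp _ (abs_nonneg x) k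
  rw [abs_of_nonpos hx, div_le_iff₀ (by positivity)] at h
  rw [abs_of_nonpos hx]
  calc (-x) ^ k * Real.exp x ≤ Real.exp (-x) * k.factorial * Real.exp x := by gcongr
    _ = k.factorial := by
      rw [mul_right_comm, ← Real.exp_add, neg_add_cancel, Real.exp_zero, one_mul]

lemma exists_bound_abs_pow_mul_iteratedDeriv_expCutoff (k n : ℕ) :
    ∃ C, ∀ x, |x| ^ k * |iteratedDeriv n expCutoff x| ≤ C := by
  obtain ⟨C, hC⟩ := (isCompact_Icc (a := (0 : ℝ)) (b := 1)).exists_bound_of_continuousOn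
    (f := fun x => |x| ^ k * |iteratedDeriv n expCutoff x|)
    ((continuous_abs.pow k).mul (contDiff_expCutoff.continuous_iteratedDeriv n
      (by exact_mod_cast le_top)).abs).continuousOn
  refine ⟨max C (k.factorial : ℝ), fun x => ?_⟩
  rcases lt_or_ge x 0 with hx | hx
  · rw [iteratedDeriv_expCutoff_of_neg n hx, abs_of_pos (Real.exp_pos x)]
    exact (abs_pow_mul_exp_le_factorial k hx.le).trans (le_max_right _ _)
  rcases le_or_gt x 1 with hx1 | hx1
  · exact (le_abs_self _).trans ((hC x ⟨hx, hx1⟩).trans (le_max_left _ _))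
  · rw [iteratedDeriv_expCutoff_of_one_lt n hx1, abs_zero, mul_zero]
    positivity

noncomputable def expCutoffSchwartz : SchwartzMap ℝ ℝ where
  toFun := expCutoff
  smooth' := contDiff_expCutoff
  decay' k n := by
    simpa only [norm_iteratedFDeriv_eq_norm_iteratedDeriv, Real.norm_eq_abs] using
      exists_bound_abs_pow_mul_iteratedDeriv_expCutoff k n

lemma expCutoffSchwartz_apply (t : ℝ) : expCutoffSchwartz t = expCutoff t := rfl

noncomputable def angularFourier (f : 𝓢(ℝ, ℂ)) (s : ℝ) : ℂ := (2 * π)⁻¹ • 𝓕 f (s / (2 * π))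

lemma integrable_abs_pow_mul_norm_angularFourier (f : 𝓢(ℝ, ℂ)) (m : ℕ) :
    Integrable fun s => |s| ^ m * ‖angularFourier f s‖ := by
  have h2π : 0 < 2 * π := by positivity
  have hrescaled := ((𝓕 f).integrable_pow_mul volume m).comp_div h2π.ne'
  convert hrescaled.const_mul ((2 * π) ^ m * (2 * π)⁻¹) using 2 with s
  rw [angularFourier, norm_smul, Real.norm_eq_abs, Real.norm_eq_abs, abs_div, abs_inv,
    abs_of_pos h2π, div_pow]
  field_simp

lemma integral_angularFourier_mul_exp (f : 𝓢(ℝ, ℂ)) (t : ℝ) :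
    ∫ s, angularFourier f s * exp (I * s * t) = f t := by
  have h2π : 0 < 2 * π := by positivity
  set Φ : ℝ → ℂ := fun ξ => exp (↑(2 * π * inner ℝ ξ t) * I) • 𝓕 f ξ
  have hpoint : ∀ s : ℝ, angularFourier f s * exp (I * s * t) = (2 * π)⁻¹ • Φ (s / (2 * π)) := by
    intro s
    simp only [Φ, angularFourier, RCLike.inner_apply, conj_trivial, smul_eq_mul]
    have hphase : 2 * π * (t * (s / (2 * π))) = s * t := by field_simp
    rw [hphase, smul_mul_assoc, mul_comm (exp _)]
    push_cast
    ring_nf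
  calc ∫ s, angularFourier f s * exp (I * s * t)
      = ∫ s, (2 * π)⁻¹ • Φ (s / (2 * π)) := integral_congr_ae (.of_forall hpoint)
    _ = ∫ ξ, Φ ξ := by
      rw [integral_smul, Measure.integral_comp_div, abs_of_pos h2π, smul_smul,
        inv_mul_cancel₀ h2π.ne', one_smul]
    _ = 𝓕⁻ (𝓕 f) t := by rw [SchwartzMap.fourierInv_coe, Real.fourierInv_eq']
    _ = f t := by rw [FourierTransform.fourierInv_fourier_eq]

theorem stmt4 :
    ∃ g : ℝ → ℂ,
      (∀ m : ℕ, Integrable (fun s : ℝ => |s| ^ m * ‖g s‖)) ∧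
      (∀ l m : ℝ, 0 < l → l < m →
      ((l / m : ℝ) : ℂ) = ∫ s : ℝ, g s * Complex.exp (Complex.I * s * Real.log l) *
        Complex.exp (-(Complex.I * s * Real.log m))) := by
  set f : 𝓢(ℝ, ℂ) := SchwartzMap.postcompCLM (𝕜 := ℝ) ofRealCLM expCutoffSchwartz
  refine ⟨angularFourier f, integrable_abs_pow_mul_norm_angularFourier f, fun l m hl hlm => ?_⟩
  have hphase : ∀ s : ℝ, exp (I * s * Real.log l) * exp (-(I * s * Real.log m)) =
      exp (I * s * ↑(Real.log l - Real.log m)) := by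
    intro s
    rw [← exp_add]
    push_cast
    ring_nf
  have hlog : Real.log l - Real.log m ≤ 0 := sub_nonpos.2 (Real.log_le_log hl hlm.le)
  simp_rw [mul_assoc (angularFourier f _), hphase]
  rw [integral_angularFourier_mul_exp, SchwartzMap.postcompCLM_apply, ofRealCLM_apply,
    expCutoffSchwartz_apply, expCutoff_of_nonpos hlog, Real.exp_sub, Real.exp_log hl,
    Real.exp_log (hl.trans hlm)]
end

section
/- Let f : ℝ → ℝ and 1 < p < ∞. Suppose there is C_p such that for every n, every increasing sequence λ_1 < ⋯ < λ_n, the Schur multiplier with symbol φ(k,l) = (f(λ_k)-f(λ_l))/(λ_k - λ_l)·1_{k≠l} has norm at most C_p on S^p_n. Then for any two self-adjoint n×n complex matrices A, B: ‖f(A) - f(B)‖_p ≤ C_p ‖A - B‖_p, where f(A) is defined by the functional calculus (applying f to the eigenvalues of A). -/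
open MeasureTheory Complex Matrix

noncomputable def schattenNorm {n : ℕ} (p : ℝ) (A : Matrix (Fin n) (Fin n) ℂ) : ℝ :=
  (∑ i, Real.sqrt ((Matrix.isHermitian_conjTranspose_mul_self A).eigenvalues i) ^ p) ^ (1 / p)

def schurMul {n : ℕ} (φ : Fin n → Fin n → ℂ) (a : Matrix (Fin n) (Fin n) ℂ) :
    Matrix (Fin n) (Fin n) ℂ := Matrix.of fun k l => φ k l * a k l

noncomputable def schurOpNorm {n : ℕ} (p : ℝ) (φ : Fin n → Fin n → ℂ) : ℝ :=
  sInf {C : ℝ | 0 ≤ C ∧ ∀ a, schattenNorm p (schurMul φ a) ≤ C * schattenNorm p a}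

noncomputable def matFun {n : ℕ} (f : ℝ → ℝ) (A : Matrix (Fin n) (Fin n) ℂ)
    (hA : A.IsHermitian) : Matrix (Fin n) (Fin n) ℂ :=
  (hA.eigenvectorUnitary : Matrix (Fin n) (Fin n) ℂ) *
    Matrix.diagonal (fun i => (f (hA.eigenvalues i) : ℂ)) *
    ((hA.eigenvectorUnitary : Matrix (Fin n) (Fin n) ℂ))ᴴ

/-! In the eigenbases of `A` and `B`, `f(A) - f(B)` is the Schur product of `A - B` with the
divided differences of `f` at pairs of eigenvalues. When the eigenvalues of `A` and of `B` are
each simple, this symbol is a restriction of the divided-difference symbol of the increasingly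
ordered joint spectrum, and restricting a Schur multiplier cannot increase its norm, because
zero-padding is an isometry of `S^p`.

The Schatten norm is invariant under isometries since it depends only on the power sums
`tr ((X* X)^k)`, `k ≥ 1`: approximate `√x ^ p` uniformly on a compact interval by polynomials
vanishing at `0`. The same approximation shows that it is continuous. The hypothesis for `n = 2`
makes `f` Lipschitz, hence continuous, so the inequality extends from matrices with simple
spectra to all Hermitian matrices by density. -/

open Filter Topology

section PowerSums

open Polynomial

lemma abs_sum_sub_sum_le {ι : Type*} [Fintype ι] {a b : ι → ℝ} {δ : ℝ}
    (h : ∀ i, |a i - b i| ≤ δ) : |∑ i, a i - ∑ i, b i| ≤ Fintype.card ι * δ := by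
  rw [← Finset.sum_sub_distrib]
  calc _ ≤ ∑ i, |a i - b i| := Finset.abs_sum_le_sum_abs _ _
    _ ≤ ∑ _i : ι, δ := Finset.sum_le_sum fun i _ => h i
    _ = Fintype.card ι * δ := by simp

lemma exists_polynomial_near_of_continuousOn_of_map_zero {g : ℝ → ℝ} {R ε : ℝ}
    (hg : ContinuousOn g (Set.Icc 0 R)) (hg0 : g 0 = 0) (hR : 0 ≤ R) (hε : 0 < ε) :
    ∃ q : ℝ[X], q.coeff 0 = 0 ∧ ∀ x ∈ Set.Icc 0 R, |q.eval x - g x| < ε := by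
  obtain ⟨q, hq⟩ := exists_polynomial_near_of_continuousOn 0 R g hg (ε / 2) (half_pos hε)
  refine ⟨q - C (q.eval 0), by simp [coeff_zero_eq_eval_zero], fun x hx => ?_⟩
  have hq0 : |q.eval 0| < ε / 2 := by simpa [hg0] using hq 0 ⟨le_rfl, hR⟩
  rw [eval_sub, eval_C, sub_right_comm]
  linarith [abs_sub (q.eval x - g x) (q.eval 0), hq x hx]

lemma sum_eval_eq_sum_coeff_mul_sum_pow {ι : Type*} [Fintype ι] (q : ℝ[X]) (e : ι → ℝ) :
    ∑ i, q.eval (e i) = ∑ j ∈ Finset.range (q.natDegree + 1), q.coeff j * ∑ i, e i ^ j := by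
  simp_rw [eval_eq_sum_range, Finset.mul_sum]
  exact Finset.sum_comm

lemma mem_Icc_of_sum_le {ι : Type*} [Fintype ι] {v : ι → ℝ} (hv : ∀ i, 0 ≤ v i) {R : ℝ}
    (hR : ∑ i, v i ≤ R) (i : ι) : v i ∈ Set.Icc 0 R :=
  ⟨hv i, (Finset.single_le_sum (fun j _ => hv j) (Finset.mem_univ i)).trans hR⟩

theorem tendsto_sum_of_tendsto_sum_pow {α ι κ : Type*} [Fintype ι] [Fintype κ] {l : Filter α}
    {g : ℝ → ℝ} (hg : ContinuousOn g (Set.Ici 0)) (hg0 : g 0 = 0)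
    {e : α → ι → ℝ} {r : κ → ℝ} (he : ∀ x i, 0 ≤ e x i) (hr : ∀ i, 0 ≤ r i)
    (h : ∀ k, 1 ≤ k → Tendsto (fun x => ∑ i, e x i ^ k) l (𝓝 (∑ i, r i ^ k))) :
    Tendsto (fun x => ∑ i, g (e x i)) l (𝓝 (∑ i, g (r i))) := by
  rw [Metric.tendsto_nhds]
  intro ε hε
  set R := ∑ i, r i + 1
  have hR : ∑ i, r i ≤ R := le_add_of_nonneg_right zero_le_one
  set δ := ε / (Fintype.card ι + Fintype.card κ + 1)
  obtain ⟨q, hq0, hq⟩ := exists_polynomial_near_of_continuousOn_of_map_zero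
    (hg.mono Set.Icc_subset_Ici_self) hg0 ((Finset.sum_nonneg fun i _ => hr i).trans hR)
    (by positivity : 0 < δ)
  have hq_tendsto : Tendsto (fun x => ∑ i, q.eval (e x i)) l (𝓝 (∑ i, q.eval (r i))) := by
    simp_rw [sum_eval_eq_sum_coeff_mul_sum_pow]
    refine tendsto_finsetSum _ fun j _ => ?_
    rcases j.eq_zero_or_pos with rfl | hj
    · simpa [hq0] using tendsto_const_nhds
    · exact (h j hj).const_mul _
  have hsum_lt : ∀ᶠ x in l, ∑ i, e x i < R :=
    (by simpa using h 1 le_rfl : Tendsto _ l _).eventually_lt_const (lt_add_one _)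
  filter_upwards [hsum_lt, Metric.tendsto_nhds.1 hq_tendsto δ (by positivity)] with x hxR hxq
  have he_near : |∑ i, g (e x i) - ∑ i, q.eval (e x i)| ≤ Fintype.card ι * δ :=
    abs_sum_sub_sum_le fun i => by
      rw [abs_sub_comm]; exact (hq _ (mem_Icc_of_sum_le (he x) hxR.le i)).le
  have hr_near : |∑ i, q.eval (r i) - ∑ i, g (r i)| ≤ Fintype.card κ * δ :=
    abs_sum_sub_sum_le fun i => (hq _ (mem_Icc_of_sum_le hr hR i)).le
  have hδ : (Fintype.card ι + Fintype.card κ + 1) * δ = ε := mul_div_cancel₀ _ (by positivity)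
  rw [Real.dist_eq] at hxq ⊢
  linarith [abs_sub_le (∑ i, g (e x i)) (∑ i, q.eval (e x i)) (∑ i, g (r i)),
    abs_sub_le (∑ i, q.eval (e x i)) (∑ i, q.eval (r i)) (∑ i, g (r i))]

theorem sum_eq_of_sum_pow_eq {ι κ : Type*} [Fintype ι] [Fintype κ] {g : ℝ → ℝ}
    (hg : ContinuousOn g (Set.Ici 0)) (hg0 : g 0 = 0) {e : ι → ℝ} {r : κ → ℝ}
    (he : ∀ i, 0 ≤ e i) (hr : ∀ i, 0 ≤ r i) (h : ∀ k, 1 ≤ k → ∑ i, e i ^ k = ∑ i, r i ^ k) :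
    ∑ i, g (e i) = ∑ i, g (r i) :=
  tendsto_nhds_unique tendsto_const_nhds <|
    tendsto_sum_of_tendsto_sum_pow (l := (atTop : Filter ℕ)) (e := fun _ => e) hg hg0
      (fun _ => he) hr fun k hk => by simp [h k hk]

end PowerSums

theorem Matrix.IsHermitian.sum_eigenvalues_pow {ι : Type*} [Fintype ι] [DecidableEq ι]
    {H : Matrix ι ι ℂ} (hH : H.IsHermitian) (k : ℕ) :
    ∑ i, hH.eigenvalues i ^ k = ((H ^ k).trace).re := by
  conv_rhs => rw [hH.spectral_theorem, ← map_pow, Unitary.conjStarAlgAut_apply, trace_mul_cycle,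
    Unitary.coe_star_mul_self, one_mul, diagonal_pow, trace_diagonal]
  simp [Complex.re_sum, ← Complex.ofReal_pow]

theorem Matrix.conj_pow_of_mul_eq_one {R ι κ : Type*} [Semiring R] [Fintype ι] [Fintype κ]
    [DecidableEq ι] [DecidableEq κ] {W : Matrix κ ι R} {V : Matrix ι κ R} (h : V * W = 1)
    (K : Matrix ι ι R) {k : ℕ} (hk : 1 ≤ k) : (W * K * V) ^ k = W * K ^ k * V := by
  induction k, hk using Nat.le_induction with
  | base => simp
  | succ k _ ih =>
    rw [pow_succ, ih, pow_succ]
    simp only [Matrix.mul_assoc]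
    rw [← Matrix.mul_assoc V, h, Matrix.one_mul]

section Schatten

variable {p : ℝ} {n m : ℕ}

lemma continuous_sqrt_rpow (hp : 0 ≤ p) : Continuous fun x : ℝ => √x ^ p :=
  (Real.continuous_rpow_const hp).comp Real.continuous_sqrt

lemma schattenNorm_eq_of_sum_pow_eq (hp : 0 < p) (X : Matrix (Fin n) (Fin n) ℂ)
    {κ : Type*} [Fintype κ] {r : κ → ℝ} (hr : ∀ i, 0 ≤ r i)
    (h : ∀ k, 1 ≤ k → (((Xᴴ * X) ^ k).trace).re = ∑ i, r i ^ k) :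
    schattenNorm p X = (∑ i, √(r i) ^ p) ^ (1 / p) := by
  rw [schattenNorm, sum_eq_of_sum_pow_eq (g := fun x => √x ^ p)
    (continuous_sqrt_rpow hp.le).continuousOn
    (by simp [hp.ne']) (eigenvalues_conjTranspose_mul_self_nonneg X) hr]
  intro k hk
  rw [IsHermitian.sum_eigenvalues_pow, h k hk]

theorem schattenNorm_mul_mul_conjTranspose (hp : 0 < p) {W₁ W₂ : Matrix (Fin m) (Fin n) ℂ}
    (h₁ : W₁ᴴ * W₁ = 1) (h₂ : W₂ᴴ * W₂ = 1) (X : Matrix (Fin n) (Fin n) ℂ) :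
    schattenNorm p (W₁ * X * W₂ᴴ) = schattenNorm p X := by
  have hXX : (W₁ * X * W₂ᴴ)ᴴ * (W₁ * X * W₂ᴴ) = W₂ * (Xᴴ * X) * W₂ᴴ := by
    simp only [conjTranspose_mul, conjTranspose_conjTranspose, Matrix.mul_assoc]
    rw [← Matrix.mul_assoc W₁ᴴ, h₁, Matrix.one_mul]
  rw [schattenNorm_eq_of_sum_pow_eq hp _ (eigenvalues_conjTranspose_mul_self_nonneg X),
    schattenNorm]
  intro k hk
  rw [hXX, conj_pow_of_mul_eq_one h₂ _ hk, trace_mul_cycle, h₂, Matrix.one_mul,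
    IsHermitian.sum_eigenvalues_pow]

lemma schattenNorm_single (hp : 0 < p) (i j : Fin n) (c : ℂ) :
    schattenNorm p (single i j c) = ‖c‖ := by
  have hsq : (single i j c)ᴴ * single i j c = single j j ((‖c‖ ^ 2 : ℝ) : ℂ) := by
    rw [conjTranspose_single, single_mul_single_same, Complex.ofReal_pow, ← Complex.conj_mul']
    rfl
  have hpow : ∀ k, 1 ≤ k →
      single j j ((‖c‖ ^ 2 : ℝ) : ℂ) ^ k = single j j (((‖c‖ ^ 2) ^ k : ℝ) : ℂ) := by
    intro k hk
    induction k, hk using Nat.le_induction with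
    | base => simp
    | succ k _ ih => rw [pow_succ, ih, single_mul_single_same, ← Complex.ofReal_mul, ← pow_succ]
  rw [schattenNorm_eq_of_sum_pow_eq hp _ (r := fun _ : Unit => ‖c‖ ^ 2) (fun _ => by positivity)]
  · simp [Real.sqrt_sq (norm_nonneg c), ← Real.rpow_mul (norm_nonneg c), hp.ne']
  intro k hk
  rw [hsq, hpow k hk, trace_single_eq_same, Complex.ofReal_re, Fintype.sum_unique]

theorem continuous_schattenNorm (hp : 0 < p) :
    Continuous (schattenNorm p : Matrix (Fin n) (Fin n) ℂ → ℝ) := by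
  have hsum : Continuous fun X : Matrix (Fin n) (Fin n) ℂ =>
      ∑ i, √((isHermitian_conjTranspose_mul_self X).eigenvalues i) ^ p := by
    refine continuous_iff_continuousAt.2 fun X₀ => tendsto_sum_of_tendsto_sum_pow
      (continuous_sqrt_rpow hp.le).continuousOn (by simp [hp.ne'])
      (fun X => eigenvalues_conjTranspose_mul_self_nonneg X)
      (eigenvalues_conjTranspose_mul_self_nonneg X₀) fun k _ => ?_
    simp_rw [IsHermitian.sum_eigenvalues_pow]
    exact (by fun_prop : Continuous fun X : Matrix (Fin n) (Fin n) ℂ =>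
      (((Xᴴ * X) ^ k).trace).re).continuousAt
  exact (Real.continuous_rpow_const (by positivity)).comp hsum

lemma schattenNorm_nonneg (X : Matrix (Fin n) (Fin n) ℂ) : 0 ≤ schattenNorm p X :=
  Real.rpow_nonneg (Finset.sum_nonneg fun _ _ => Real.rpow_nonneg (Real.sqrt_nonneg _) _) _

lemma sum_eigenvalues_conjTranspose_mul_self (X : Matrix (Fin n) (Fin n) ℂ) :
    ∑ i, (isHermitian_conjTranspose_mul_self X).eigenvalues i = ∑ k, ∑ l, ‖X k l‖ ^ 2 := by
  have h := (isHermitian_conjTranspose_mul_self X).sum_eigenvalues_pow 1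
  simp only [pow_one] at h
  rw [h, Finset.sum_comm]
  simp [trace, mul_apply, Complex.conj_mul', ← Complex.ofReal_pow, Complex.re_sum]

lemma sqrt_eigenvalue_le_schattenNorm (hp : 0 < p) (X : Matrix (Fin n) (Fin n) ℂ) (i : Fin n) :
    √((isHermitian_conjTranspose_mul_self X).eigenvalues i) ≤ schattenNorm p X := by
  set e := (isHermitian_conjTranspose_mul_self X).eigenvalues
  rw [schattenNorm, ← Real.rpow_rpow_inv (Real.sqrt_nonneg _) hp.ne', one_div]
  exact Real.rpow_le_rpow (by positivity) (Finset.single_le_sum (f := fun j => √(e j) ^ p)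
    (fun j _ => by positivity) (Finset.mem_univ i)) (by positivity)

lemma schattenNorm_le_sqrt_sum_sq (hp : 0 < p) (X : Matrix (Fin n) (Fin n) ℂ) :
    schattenNorm p X ≤ (n : ℝ) ^ (1 / p) * √(∑ k, ∑ l, ‖X k l‖ ^ 2) := by
  set e := (isHermitian_conjTranspose_mul_self X).eigenvalues
  have he := eigenvalues_conjTranspose_mul_self_nonneg X
  have hle : ∀ i, √(e i) ^ p ≤ √(∑ k, ∑ l, ‖X k l‖ ^ 2) ^ p := fun i => by
    rw [← sum_eigenvalues_conjTranspose_mul_self]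
    exact Real.rpow_le_rpow (Real.sqrt_nonneg _)
      (Real.sqrt_le_sqrt (Finset.single_le_sum (fun j _ => he j) (Finset.mem_univ i))) hp.le
  calc schattenNorm p X ≤ ((n : ℝ) * √(∑ k, ∑ l, ‖X k l‖ ^ 2) ^ p) ^ (1 / p) := by
        refine Real.rpow_le_rpow (by positivity) ?_ (by positivity)
        simpa using Finset.sum_le_sum fun i (_ : i ∈ Finset.univ) => hle i
    _ = (n : ℝ) ^ (1 / p) * √(∑ k, ∑ l, ‖X k l‖ ^ 2) := by
        rw [Real.mul_rpow (by positivity) (by positivity), ← Real.rpow_mul (Real.sqrt_nonneg _),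
          mul_one_div_cancel hp.ne', Real.rpow_one]

lemma sqrt_sum_sq_le_schattenNorm (hp : 0 < p) (X : Matrix (Fin n) (Fin n) ℂ) :
    √(∑ k, ∑ l, ‖X k l‖ ^ 2) ≤ √n * schattenNorm p X := by
  have he := eigenvalues_conjTranspose_mul_self_nonneg X
  rw [← sum_eigenvalues_conjTranspose_mul_self, ← Real.sqrt_sq (schattenNorm_nonneg X),
    ← Real.sqrt_mul (Nat.cast_nonneg n)]
  refine Real.sqrt_le_sqrt ?_
  calc _ = ∑ i, √((isHermitian_conjTranspose_mul_self X).eigenvalues i) ^ 2 := by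
        simp [Real.sq_sqrt (he _)]
    _ ≤ ∑ _i : Fin n, schattenNorm p X ^ 2 := Finset.sum_le_sum fun i _ =>
        pow_le_pow_left₀ (Real.sqrt_nonneg _) (sqrt_eigenvalue_le_schattenNorm hp X i) 2
    _ = n * schattenNorm p X ^ 2 := by simp

lemma sqrt_sum_sq_schurMul_le (φ : Fin n → Fin n → ℂ) (X : Matrix (Fin n) (Fin n) ℂ) :
    √(∑ k, ∑ l, ‖schurMul φ X k l‖ ^ 2) ≤ ‖φ‖ * √(∑ k, ∑ l, ‖X k l‖ ^ 2) := by
  rw [← Real.sqrt_sq (norm_nonneg φ), ← Real.sqrt_mul (sq_nonneg _), Finset.mul_sum]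
  refine Real.sqrt_le_sqrt (Finset.sum_le_sum fun k _ => ?_)
  rw [Finset.mul_sum]
  refine Finset.sum_le_sum fun l _ => ?_
  rw [schurMul, of_apply, norm_mul, mul_pow]
  exact mul_le_mul_of_nonneg_right (pow_le_pow_left₀ (norm_nonneg _)
    ((norm_le_pi_norm (φ k) l).trans (norm_le_pi_norm φ k)) 2) (sq_nonneg _)

lemma exists_schattenNorm_schurMul_le (hp : 0 < p) (φ : Fin n → Fin n → ℂ) :
    ∃ C₀, 0 ≤ C₀ ∧ ∀ X, schattenNorm p (schurMul φ X) ≤ C₀ * schattenNorm p X := by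
  refine ⟨(n : ℝ) ^ (1 / p) * ‖φ‖ * √n, by positivity, fun X => ?_⟩
  calc schattenNorm p (schurMul φ X)
      ≤ (n : ℝ) ^ (1 / p) * √(∑ k, ∑ l, ‖schurMul φ X k l‖ ^ 2) := schattenNorm_le_sqrt_sum_sq hp _
    _ ≤ (n : ℝ) ^ (1 / p) * (‖φ‖ * (√n * schattenNorm p X)) := by
        gcongr
        exact (sqrt_sum_sq_schurMul_le φ X).trans
          (mul_le_mul_of_nonneg_left (sqrt_sum_sq_le_schattenNorm hp X) (norm_nonneg φ))
    _ = (n : ℝ) ^ (1 / p) * ‖φ‖ * √n * schattenNorm p X := by ring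

theorem schattenNorm_schurMul_le_schurOpNorm (hp : 0 < p) (φ : Fin n → Fin n → ℂ)
    (X : Matrix (Fin n) (Fin n) ℂ) :
    schattenNorm p (schurMul φ X) ≤ schurOpNorm p φ * schattenNorm p X := by
  set S := {C : ℝ | 0 ≤ C ∧ ∀ a, schattenNorm p (schurMul φ a) ≤ C * schattenNorm p a}
  have hS : IsClosed S := by
    simp only [S, Set.ofPred_and, Set.ofPred_forall]
    exact isClosed_Ici.inter (isClosed_iInter fun a =>
      isClosed_le continuous_const (continuous_id.mul continuous_const))
  obtain ⟨C₀, hC₀⟩ := exists_schattenNorm_schurMul_le hp φ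
  exact (hS.csInf_mem ⟨C₀, hC₀⟩ ⟨0, fun C hC => hC.1⟩).2 X

end Schatten

section DividedDifferences

variable {p C : ℝ} {n : ℕ} {f : ℝ → ℝ}

noncomputable def divDiffSymbol (f : ℝ → ℝ) {ι κ : Type*} (a : ι → ℝ) (b : κ → ℝ) : ι → κ → ℂ :=
  fun k l => (slope f (b l) (a k) : ℂ)

-- at `k = l` the difference quotient is `0 / 0 = 0`, so the `if` is redundant
lemma ite_divDiff_eq_divDiffSymbol (f : ℝ → ℝ) (lam : Fin n → ℝ) :
    (fun k l => if k = l then 0 else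
      (((f (lam k) - f (lam l)) / (lam k - lam l) : ℝ) : ℂ)) = divDiffSymbol f lam lam := by
  ext k l
  split_ifs with h
  · simp [divDiffSymbol, h]
  · rw [divDiffSymbol, slope_def_field]

lemma schurMul_single (φ : Fin n → Fin n → ℂ) (i j : Fin n) (c : ℂ) :
    schurMul φ (single i j c) = single i j (φ i j * c) := by
  ext k l
  simp only [schurMul, of_apply, single_apply]
  split_ifs with h
  · obtain ⟨rfl, rfl⟩ := h; rfl
  · exact mul_zero _

theorem lipschitzWith_of_schattenNorm_schurMul_le (hp : 0 < p)
    (hC : ∀ lam : Fin 2 → ℝ, StrictMono lam →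
      ∀ X, schattenNorm p (schurMul (divDiffSymbol f lam lam) X) ≤ C * schattenNorm p X) :
    LipschitzWith (Real.toNNReal C) f := by
  have hlt : ∀ x y, x < y → |f y - f x| ≤ C * |y - x| := fun x y hxy => by
    have h := hC ![x, y] (by simpa [StrictMono, Fin.forall_fin_two] using hxy) (single 1 0 1)
    rw [schurMul_single, schattenNorm_single hp, schattenNorm_single hp, mul_one, norm_one,
      mul_one, divDiffSymbol, Complex.norm_real, Real.norm_eq_abs] at h
    have hs : f y - f x = (y - x) * slope f x y := by simpa using (sub_smul_slope f x y).symm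
    rw [hs, abs_mul, mul_comm]
    exact mul_le_mul_of_nonneg_right (by simpa using h) (abs_nonneg _)
  refine LipschitzWith.of_dist_le_mul fun x y => ?_
  rw [Real.dist_eq, Real.dist_eq]
  refine le_trans ?_ (mul_le_mul_of_nonneg_right (Real.le_coe_toNNReal C) (abs_nonneg _))
  rcases lt_trichotomy x y with h | rfl | h
  · rw [abs_sub_comm, abs_sub_comm x]; exact hlt x y h
  · simp
  · exact hlt y x h

end DividedDifferences

section Embedding

variable {p C : ℝ} {n m : ℕ}

def embeddingMatrix (σ : Fin n → Fin m) : Matrix (Fin m) (Fin n) ℂ :=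
  of fun i k => if σ k = i then 1 else 0

lemma embeddingMatrix_conjTranspose_mul_self {σ : Fin n → Fin m} (hσ : Function.Injective σ) :
    (embeddingMatrix σ)ᴴ * embeddingMatrix σ = 1 := by
  ext k k'
  simp [embeddingMatrix, mul_apply, one_apply, hσ.eq_iff]

lemma embeddingMatrix_mul_mul_apply (σ τ : Fin n → Fin m) (Y : Matrix (Fin n) (Fin n) ℂ)
    (i j : Fin m) : (embeddingMatrix σ * Y * (embeddingMatrix τ)ᴴ) i j =
      ∑ k, ∑ l, if σ k = i ∧ τ l = j then Y k l else 0 := by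
  simp only [embeddingMatrix, mul_apply, conjTranspose_apply, of_apply, ite_and]
  rw [Finset.sum_comm]
  refine Finset.sum_congr rfl fun l _ => ?_
  split_ifs <;> simp

lemma schurMul_embeddingMatrix (φ : Fin m → Fin m → ℂ) (σ τ : Fin n → Fin m)
    (X : Matrix (Fin n) (Fin n) ℂ) :
    schurMul φ (embeddingMatrix σ * X * (embeddingMatrix τ)ᴴ) =
      embeddingMatrix σ * schurMul (fun k l => φ (σ k) (τ l)) X * (embeddingMatrix τ)ᴴ := by
  ext i j
  simp only [schurMul, of_apply, embeddingMatrix_mul_mul_apply, Finset.mul_sum]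
  refine Finset.sum_congr rfl fun k _ => Finset.sum_congr rfl fun l _ => ?_
  split_ifs with h
  · obtain ⟨rfl, rfl⟩ := h; rfl
  · exact mul_zero _

theorem schattenNorm_schurMul_comp_le (hp : 0 < p) {φ : Fin m → Fin m → ℂ}
    (hφ : ∀ X, schattenNorm p (schurMul φ X) ≤ C * schattenNorm p X) {σ τ : Fin n → Fin m}
    (hσ : Function.Injective σ) (hτ : Function.Injective τ) (X : Matrix (Fin n) (Fin n) ℂ) :
    schattenNorm p (schurMul (fun k l => φ (σ k) (τ l)) X) ≤ C * schattenNorm p X := by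
  have hσ' := embeddingMatrix_conjTranspose_mul_self hσ
  have hτ' := embeddingMatrix_conjTranspose_mul_self hτ
  rw [← schattenNorm_mul_mul_conjTranspose hp hσ' hτ', ← schurMul_embeddingMatrix,
    ← schattenNorm_mul_mul_conjTranspose hp hσ' hτ' X]
  exact hφ _

end Embedding

section Diagonalized

variable {p : ℝ} {n : ℕ}

def conjDiagonal (U : Matrix (Fin n) (Fin n) ℂ) (v : Fin n → ℝ) : Matrix (Fin n) (Fin n) ℂ :=
  U * diagonal (fun i => (v i : ℂ)) * Uᴴ

@[fun_prop]
lemma continuous_conjDiagonal (U : Matrix (Fin n) (Fin n) ℂ) : Continuous (conjDiagonal U) := by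
  unfold conjDiagonal
  fun_prop

lemma Matrix.IsHermitian.conjDiagonal_eigenvalues {A : Matrix (Fin n) (Fin n) ℂ}
    (hA : A.IsHermitian) : conjDiagonal hA.eigenvectorUnitary hA.eigenvalues = A := by
  conv_rhs => rw [hA.spectral_theorem, Unitary.conjStarAlgAut_apply, star_eq_conjTranspose]
  rfl

lemma schattenNorm_conjTranspose_mul_mul (hp : 0 < p) {U V : Matrix (Fin n) (Fin n) ℂ}
    (hU : U ∈ unitaryGroup (Fin n) ℂ) (hV : V ∈ unitaryGroup (Fin n) ℂ)
    (X : Matrix (Fin n) (Fin n) ℂ) : schattenNorm p (Uᴴ * X * V) = schattenNorm p X := by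
  have hU' : Uᴴᴴ * Uᴴ = 1 := by
    rw [conjTranspose_conjTranspose, ← star_eq_conjTranspose]; exact mem_unitaryGroup_iff.1 hU
  have hV' : Vᴴᴴ * Vᴴ = 1 := by
    rw [conjTranspose_conjTranspose, ← star_eq_conjTranspose]; exact mem_unitaryGroup_iff.1 hV
  simpa using schattenNorm_mul_mul_conjTranspose hp hU' hV' X

lemma conjTranspose_mul_conjDiagonal_sub_mul {U V : Matrix (Fin n) (Fin n) ℂ}
    (hU : U ∈ unitaryGroup (Fin n) ℂ) (hV : V ∈ unitaryGroup (Fin n) ℂ) (a b : Fin n → ℝ) :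
    Uᴴ * (conjDiagonal U a - conjDiagonal V b) * V =
      diagonal (fun k => (a k : ℂ)) * (Uᴴ * V) - Uᴴ * V * diagonal (fun l => (b l : ℂ)) := by
  have hU' : Uᴴ * U = 1 := by rw [← star_eq_conjTranspose]; exact mem_unitaryGroup_iff'.1 hU
  have hV' : Vᴴ * V = 1 := by rw [← star_eq_conjTranspose]; exact mem_unitaryGroup_iff'.1 hV
  simp only [conjDiagonal, Matrix.mul_sub, Matrix.sub_mul, Matrix.mul_assoc]
  rw [← Matrix.mul_assoc Uᴴ U, hU', Matrix.one_mul, hV', Matrix.mul_one]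

lemma schurMul_divDiffSymbol_commutator (f : ℝ → ℝ) (a b : Fin n → ℝ)
    (W : Matrix (Fin n) (Fin n) ℂ) :
    schurMul (divDiffSymbol f a b)
        (diagonal (fun k => (a k : ℂ)) * W - W * diagonal (fun l => (b l : ℂ))) =
      diagonal (fun k => (f (a k) : ℂ)) * W - W * diagonal (fun l => (f (b l) : ℂ)) := by
  ext k l
  have h : ((a k - b l : ℝ) : ℂ) * slope f (b l) (a k) = (f (a k) - f (b l) : ℝ) := by
    exact_mod_cast (by simpa using sub_smul_slope f (b l) (a k))
  simp only [schurMul, divDiffSymbol, of_apply, Matrix.sub_apply, diagonal_mul, mul_diagonal]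
  push_cast at h
  linear_combination W k l * h

end Diagonalized

section Main

variable {p C : ℝ} {n : ℕ} {f : ℝ → ℝ}

theorem schattenNorm_conjDiagonal_sub_le_of_injective (hp : 0 < p)
    (hC : ∀ (m : ℕ) (lam : Fin m → ℝ), StrictMono lam →
      ∀ X, schattenNorm p (schurMul (divDiffSymbol f lam lam) X) ≤ C * schattenNorm p X)
    {U V : Matrix (Fin n) (Fin n) ℂ} (hU : U ∈ unitaryGroup (Fin n) ℂ)
    (hV : V ∈ unitaryGroup (Fin n) ℂ) {a b : Fin n → ℝ} (ha : Function.Injective a)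
    (hb : Function.Injective b) :
    schattenNorm p (conjDiagonal U (f ∘ a) - conjDiagonal V (f ∘ b)) ≤
      C * schattenNorm p (conjDiagonal U a - conjDiagonal V b) := by
  classical
  set E := Finset.univ.image a ∪ Finset.univ.image b
  set e := E.orderIsoOfFin rfl
  set lam : Fin E.card → ℝ := fun i => e i
  have hlam : StrictMono lam := fun i j h => e.strictMono h
  set σ : Fin n → Fin E.card := fun k => e.symm ⟨a k, by simp [E]⟩
  set τ : Fin n → Fin E.card := fun l => e.symm ⟨b l, by simp [E]⟩
  have hσ : lam ∘ σ = a := funext fun k => by simp [lam, σ]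
  have hτ : lam ∘ τ = b := funext fun l => by simp [lam, τ]
  have hσ_inj : Function.Injective σ := by rw [← hσ] at ha; exact ha.of_comp
  have hτ_inj : Function.Injective τ := by rw [← hτ] at hb; exact hb.of_comp
  have hsymb : (fun k l => divDiffSymbol f lam lam (σ k) (τ l)) = divDiffSymbol f a b := by
    rw [← hσ, ← hτ]; rfl
  calc schattenNorm p (conjDiagonal U (f ∘ a) - conjDiagonal V (f ∘ b))
      = schattenNorm p (schurMul (fun k l => divDiffSymbol f lam lam (σ k) (τ l))
          (Uᴴ * (conjDiagonal U a - conjDiagonal V b) * V)) := by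
        rw [hsymb, conjTranspose_mul_conjDiagonal_sub_mul hU hV,
          schurMul_divDiffSymbol_commutator, ← conjTranspose_mul_conjDiagonal_sub_mul hU hV,
          schattenNorm_conjTranspose_mul_mul hp hU hV]
        rfl
    _ ≤ C * schattenNorm p (Uᴴ * (conjDiagonal U a - conjDiagonal V b) * V) :=
        schattenNorm_schurMul_comp_le hp (hC _ lam hlam) hσ_inj hτ_inj _
    _ = C * schattenNorm p (conjDiagonal U a - conjDiagonal V b) := by
        rw [schattenNorm_conjTranspose_mul_mul hp hU hV]

lemma eventually_injective_add_smul (a : Fin n → ℝ) :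
    ∀ᶠ t in 𝓝[≠] (0 : ℝ), Function.Injective (a + t • fun k : Fin n => (k : ℝ)) := by
  have hfin := (Set.finite_range fun q : Fin n × Fin n => (a q.2 - a q.1) / ((q.1 : ℝ) - q.2))
  filter_upwards [hfin.eventually_cofinite_notMem.filter_mono (nhdsNE_le_cofinite 0)]
    with t ht k k' hkk'
  by_contra hne
  have hne' : (k : ℝ) - k' ≠ 0 := sub_ne_zero.2 (by exact_mod_cast Fin.val_injective.ne hne)
  refine ht ⟨(k, k'), ?_⟩
  simp only [Pi.add_apply, Pi.smul_apply, smul_eq_mul] at hkk'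
  field_simp
  linarith

lemma dense_setOf_injective : Dense {a : Fin n → ℝ | Function.Injective a} := fun a => by
  have hcont : Continuous fun t : ℝ => a + t • fun k : Fin n => (k : ℝ) := by fun_prop
  exact mem_closure_of_tendsto (by simpa using (hcont.tendsto 0).mono_left nhdsWithin_le_nhds)
    (eventually_injective_add_smul a)

theorem schattenNorm_conjDiagonal_sub_le (hp : 0 < p) (hf : Continuous f)
    {U V : Matrix (Fin n) (Fin n) ℂ}
    (h : ∀ a b : Fin n → ℝ, Function.Injective a → Function.Injective b →
      schattenNorm p (conjDiagonal U (f ∘ a) - conjDiagonal V (f ∘ b)) ≤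
        C * schattenNorm p (conjDiagonal U a - conjDiagonal V b))
    (a b : Fin n → ℝ) :
    schattenNorm p (conjDiagonal U (f ∘ a) - conjDiagonal V (f ∘ b)) ≤
      C * schattenNorm p (conjDiagonal U a - conjDiagonal V b) := by
  have hS := continuous_schattenNorm (n := n) hp
  refine (dense_setOf_injective.prod dense_setOf_injective).induction
    (P := fun ab : (Fin n → ℝ) × (Fin n → ℝ) =>
      schattenNorm p (conjDiagonal U (f ∘ ab.1) - conjDiagonal V (f ∘ ab.2)) ≤
        C * schattenNorm p (conjDiagonal U ab.1 - conjDiagonal V ab.2))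
    (fun ab hab => h ab.1 ab.2 hab.1 hab.2) (isClosed_le (by fun_prop) (by fun_prop)) (a, b)

end Main

theorem stmt14 (f : ℝ → ℝ) (p : ℝ) (hp : 1 < p) (C : ℝ)
    (hC : ∀ (n : ℕ) (lam : Fin n → ℝ), StrictMono lam →
      schurOpNorm p (fun k l => if k = l then 0 else
      (((f (lam k) - f (lam l)) / (lam k - lam l) : ℝ) : ℂ)) ≤ C)
    (n : ℕ) (A B : Matrix (Fin n) (Fin n) ℂ) (hA : A.IsHermitian) (hB : B.IsHermitian) :
    schattenNorm p (matFun f A hA - matFun f B hB) ≤ C * schattenNorm p (A - B) := by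
  have hp₀ : 0 < p := zero_lt_one.trans hp
  have hC' : ∀ (m : ℕ) (lam : Fin m → ℝ), StrictMono lam →
      ∀ X, schattenNorm p (schurMul (divDiffSymbol f lam lam) X) ≤ C * schattenNorm p X :=
    fun m lam hlam X => by
      have h := hC m lam hlam
      rw [ite_divDiff_eq_divDiffSymbol] at h
      exact (schattenNorm_schurMul_le_schurOpNorm hp₀ _ X).trans
        (mul_le_mul_of_nonneg_right h (schattenNorm_nonneg X))
  have hf : Continuous f := (lipschitzWith_of_schattenNorm_schurMul_le hp₀ (hC' 2)).continuous
  calc schattenNorm p (matFun f A hA - matFun f B hB)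
      = schattenNorm p (conjDiagonal hA.eigenvectorUnitary (f ∘ hA.eigenvalues) -
          conjDiagonal hB.eigenvectorUnitary (f ∘ hB.eigenvalues)) := rfl
    _ ≤ C * schattenNorm p (conjDiagonal hA.eigenvectorUnitary hA.eigenvalues -
          conjDiagonal hB.eigenvectorUnitary hB.eigenvalues) :=
        schattenNorm_conjDiagonal_sub_le hp₀ hf (fun _ _ ha hb =>
          schattenNorm_conjDiagonal_sub_le_of_injective hp₀ hC' (Subtype.prop _)
            (Subtype.prop _) ha hb) _ _
    _ = C * schattenNorm p (A - B) := by
        rw [hA.conjDiagonal_eigenvalues, hB.conjDiagonal_eigenvalues]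
end
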